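/- Let 𝕜 have characteristic 0 and let B_n be the set of linear forms {x_i : 1 ≤ i ≤ n} ∪ {x_i − x_j, x_i + x_j : 1 ≤ i < j ≤ n} in 𝕜[x_1,…,x_n]. For 1 ≤ k ≤ n, let p_k ∈ 𝕜^n be the point whose first k coordinates are 1 and whose remaining coordinates are 0. Then the set X_k of forms in B_n vanishing at p_k is a copoint (rank-(n−1) flat) of the linear matroid on B_n, and the complementary cocircuit B_n \ X_k, consisting of the forms not vanishing at p_k, has size C(k,2) + k + 2k(n−k), where C(k,2) = k(k−1)/2. -/

import Mathlib

open Set Submodule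

/-- The linear matroid on a finite set `E` of vectors in a `𝕜`-vector space `W`:
a set is independent iff it is a linearly independent subset of `E`. -/
noncomputable def vecMatroid (𝕜 : Type) {W : Type} [Field 𝕜] [AddCommGroup W] [Module 𝕜 W]
    (E : Set W) (hE : E.Finite) : Matroid W :=
  (IndepMatroid.ofFinite hE
    (fun I => I ⊆ E ∧ LinearIndependent 𝕜 (fun x : I => (x : W)))
    ⟨Set.empty_subset _, linearIndependent_empty_type⟩
    (fun I J hJ hIJ => ⟨hIJ.trans hJ.1, (show LinearIndepOn 𝕜 id J from hJ.2).mono hIJ⟩)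
    (by
      rintro I J ⟨hIE, hI⟩ ⟨hJE, hJ⟩ hlt
      by_contra hcon
      push_neg at hcon
      have hspan : J ⊆ (span 𝕜 I : Submodule 𝕜 W) := by
        intro e he
        by_cases heI : e ∈ I
        · exact subset_span heI
        · by_contra hesp
          exact (hcon e he heI) (insert_subset (hJE he) hIE)
              ((show LinearIndepOn 𝕜 id I from hI).id_insert hesp)
      have hfinI : I.Finite := hE.subset hIE
      have hfinJ : J.Finite := hE.subset hJE
      letI := hfinI.fintype
      letI := hfinJ.fintype
      have hle : Fintype.card J ≤ Fintype.card I := by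
        refine linearIndependent_le_span_aux' (fun x : J => (x : W)) hJ I ?_
        rwa [Subtype.range_coe]
      rw [Set.ncard_eq_toFinset_card' I, Set.ncard_eq_toFinset_card' J,
        Set.toFinset_card, Set.toFinset_card] at hlt
      omega)
    (fun I hI => hI.1)).matroid

/-- The matroid of a central arrangement: the linear matroid on its set of defining
linear forms. -/
noncomputable def arrMatroid {𝕜 : Type} [Field 𝕜] {n : ℕ}
    (A : Finset (MvPolynomial (Fin n) 𝕜)) : Matroid (MvPolynomial (Fin n) 𝕜) :=
  vecMatroid 𝕜 (↑A) A.finite_toSet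

/-- The (extended) rank of a set in a matroid: the supremum of the cardinalities of its
independent subsets. -/
noncomputable def Matroid.mrk {α : Type} (M : Matroid α) (X : Set α) : ℕ∞ :=
  ⨆ I ∈ {I | M.Indep I ∧ I ⊆ X}, I.encard



open Set Submodule

section Setup
variable {𝕜 : Type} [Field 𝕜] {n : ℕ}

/-- coefficient extraction -/
noncomputable def psiMap (𝕜 : Type) [Field 𝕜] (n : ℕ) :
    MvPolynomial (Fin n) 𝕜 →ₗ[𝕜] (Fin n → 𝕜) :=
  LinearMap.pi (fun i => MvPolynomial.lcoeff 𝕜 (Finsupp.single i 1))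

lemma psiMap_X (i : Fin n) : psiMap 𝕜 n (MvPolynomial.X i) = Pi.single i 1 := by
  classical
  funext j
  simp only [psiMap, LinearMap.pi_apply, MvPolynomial.lcoeff_apply]
  rw [MvPolynomial.coeff_X']
  by_cases h : i = j
  · subst h; simp
  · rw [if_neg (fun hc => h ((Finsupp.single_left_inj one_ne_zero).mp hc)),
      Pi.single_eq_of_ne (Ne.symm h)]

/-- section of psiMap -/
noncomputable def elMap (𝕜 : Type) [Field 𝕜] (n : ℕ) :
    (Fin n → 𝕜) →ₗ[𝕜] MvPolynomial (Fin n) 𝕜 where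
  toFun := fun v => ∑ i, MvPolynomial.C (v i) * MvPolynomial.X i
  map_add' := by
    intro a b
    rw [← Finset.sum_add_distrib]
    exact Finset.sum_congr rfl fun i _ => by rw [Pi.add_apply, map_add, add_mul]
  map_smul' := by
    intro c a
    rw [RingHom.id_apply, Finset.smul_sum]
    exact Finset.sum_congr rfl fun i _ => by
      rw [Pi.smul_apply, smul_eq_mul, map_mul, MvPolynomial.smul_eq_C_mul, mul_assoc]

lemma elMap_single (i : Fin n) :
    elMap 𝕜 n (Pi.single i 1) = MvPolynomial.X i := by
  classical
  simp only [elMap, LinearMap.coe_mk, AddHom.coe_mk]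
  rw [Finset.sum_eq_single i]
  · simp
  · intro b _ hb
    rw [Pi.single_eq_of_ne hb]; simp
  · simp

lemma elMap_psiMap_X (i : Fin n) :
    elMap 𝕜 n (psiMap 𝕜 n (MvPolynomial.X i)) = MvPolynomial.X i := by
  rw [psiMap_X, elMap_single]

/-- dot with p -/
noncomputable def dotMap (𝕜 : Type) [Field 𝕜] {n : ℕ} (p : Fin n → 𝕜) :
    (Fin n → 𝕜) →ₗ[𝕜] 𝕜 where
  toFun := fun v => ∑ i, v i * p i
  map_add' := by
    intro a b
    rw [← Finset.sum_add_distrib]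
    exact Finset.sum_congr rfl fun i _ => by rw [Pi.add_apply, add_mul]
  map_smul' := by
    intro c a
    rw [RingHom.id_apply, Finset.smul_sum]
    exact Finset.sum_congr rfl fun i _ => by
      rw [Pi.smul_apply, smul_eq_mul, smul_eq_mul, mul_assoc]

lemma dotMap_single (p : Fin n → 𝕜) (i : Fin n) :
    dotMap 𝕜 p (Pi.single i 1) = p i := by
  classical
  simp only [dotMap, LinearMap.coe_mk, AddHom.coe_mk]
  rw [Finset.sum_eq_single i]
  · simp
  · intro b _ hb; rw [Pi.single_eq_of_ne hb]; simp
  · simp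

lemma sum_psiMap_X (i : Fin n) : ∑ a, psiMap 𝕜 n (MvPolynomial.X i) a = 1 := by
  classical
  rw [psiMap_X]
  simp [Finset.sum_pi_single']

end Setup



private lemma triangular_linearIndependent {𝕜 : Type} [Field 𝕜] {n m : ℕ}
    (v : Fin m → Fin n → 𝕜) (c : Fin m → Fin n)
    (hdiag : ∀ j, v j (c j) ≠ 0) (hup : ∀ i j : Fin m, i < j → v i (c j) = 0) :
    LinearIndependent 𝕜 v := by
  rw [Fintype.linearIndependent_iff]
  intro g hg
  by_contra hcon
  push_neg at hcon
  obtain ⟨j0, hj0⟩ := hcon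
  classical
  set s : Finset (Fin m) := Finset.univ.filter (fun j => g j ≠ 0) with hs
  have hne : s.Nonempty := ⟨j0, by simp [hs, hj0]⟩
  set J := s.max' hne with hJ
  have hJs : J ∈ s := s.max'_mem hne
  have hgJ : g J ≠ 0 := by simpa [hs] using hJs
  have hsum : ∑ j, g j * v j (c J) = 0 := by
    simpa using congrFun hg (c J)
  rw [Finset.sum_eq_single J] at hsum
  · rcases mul_eq_zero.mp hsum with h | h
    · exact hgJ h
    · exact hdiag J h
  · intro j _ hjJ
    by_cases hgj : g j = 0
    · simp [hgj]
    · have hmem : j ∈ s := by simp [hs, hgj]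
      have hlt : j < J := lt_of_le_of_ne (s.le_max' j hmem) hjJ
      rw [hup j J hlt, mul_zero]
  · simp

private lemma card_pairs (m : ℕ) [DecidableEq (Fin m)] :
    (Finset.univ.filter (fun q : Fin m × Fin m => q.1 < q.2)).card = m.choose 2 := by
  classical
  rw [Finset.card_eq_sum_card_fiberwise
    (f := Prod.snd) (t := Finset.univ) (fun x _ => Finset.mem_univ _)]
  have h1 : ∀ j : Fin m,
      ((Finset.univ.filter (fun q : Fin m × Fin m => q.1 < q.2)).filter
        (fun q => q.2 = j)).card = (j : ℕ) := by
    intro j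
    rw [← Fin.card_Iio (b := j)]
    apply Finset.card_bij (fun q _ => q.1)
    · intro q hq
      simp only [Finset.mem_filter, Finset.mem_univ, true_and] at hq
      simp [Finset.mem_Iio, hq.2 ▸ hq.1]
    · intro a ha b hb hab
      simp only [Finset.mem_filter, Finset.mem_univ, true_and] at ha hb
      exact Prod.ext hab (ha.2.trans hb.2.symm)
    · intro i hi
      exact ⟨(i, j), by simp [Finset.mem_Iio.mp hi], rfl⟩
  rw [Finset.sum_congr rfl (fun j _ => h1 j)]
  rw [Fin.sum_univ_eq_sum_range (fun i => i) m, Finset.sum_range_id, Nat.choose_two_right]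

private lemma fin_single_apply {𝕜 : Type} [Field 𝕜] {n : ℕ} (a i : Fin n) :
    (Pi.single i (1:𝕜) : Fin n → 𝕜) a = ((if (a:ℕ) = (i:ℕ) then 1 else 0 : ℤ) : 𝕜) := by
  rw [Pi.single_apply]
  by_cases h : a = i
  · rw [if_pos h, if_pos (by rw [h]), Int.cast_one]
  · rw [if_neg h, if_neg (fun hc => h (Fin.ext hc)), Int.cast_zero]

private lemma X_sub_inj {𝕜 : Type} [Field 𝕜] [CharZero 𝕜] {n : ℕ} (i j a b : Fin n)
    (hij : i ≠ j) (hab : a ≠ b)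
    (h : MvPolynomial.X i - MvPolynomial.X j =
      (MvPolynomial.X a : MvPolynomial (Fin n) 𝕜) - MvPolynomial.X b) : i = a ∧ j = b := by
  have hijn : (i:ℕ) ≠ (j:ℕ) := fun hc => hij (Fin.ext hc)
  have habn : (a:ℕ) ≠ (b:ℕ) := fun hc => hab (Fin.ext hc)
  have hψ := congrArg (psiMap 𝕜 n) h
  rw [map_sub, map_sub, psiMap_X, psiMap_X, psiMap_X, psiMap_X] at hψ
  have h1 := congrFun hψ i
  have h2 := congrFun hψ j
  simp only [Pi.sub_apply, fin_single_apply] at h1 h2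
  rw [← Int.cast_sub, ← Int.cast_sub, Int.cast_inj] at h1 h2
  suffices hs : (i:ℕ) = (a:ℕ) ∧ (j:ℕ) = (b:ℕ) from ⟨Fin.ext hs.1, Fin.ext hs.2⟩
  split_ifs at h1 h2 <;> omega

private lemma X_add_inj {𝕜 : Type} [Field 𝕜] [CharZero 𝕜] {n : ℕ} (i j a b : Fin n)
    (hij : i < j) (hab : a < b)
    (h : MvPolynomial.X i + MvPolynomial.X j =
      (MvPolynomial.X a : MvPolynomial (Fin n) 𝕜) + MvPolynomial.X b) : i = a ∧ j = b := by
  have hijn : (i:ℕ) < (j:ℕ) := hij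
  have habn : (a:ℕ) < (b:ℕ) := hab
  have hψ := congrArg (psiMap 𝕜 n) h
  rw [map_add, map_add, psiMap_X, psiMap_X, psiMap_X, psiMap_X] at hψ
  have h1 := congrFun hψ i
  have h2 := congrFun hψ j
  simp only [Pi.add_apply, fin_single_apply] at h1 h2
  rw [← Int.cast_add, ← Int.cast_add, Int.cast_inj] at h1 h2
  suffices hs : (i:ℕ) = (a:ℕ) ∧ (j:ℕ) = (b:ℕ) from ⟨Fin.ext hs.1, Fin.ext hs.2⟩
  split_ifs at h1 h2 <;> omega

/-- Let `𝕜` have characteristic `0` and let `Bₙ` be the set of linear forms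
`{xᵢ} ∪ {xᵢ - xⱼ, xᵢ + xⱼ : i < j}` in `𝕜[x₁,…,xₙ]`.  For `1 ≤ k ≤ n`, let `pₖ ∈ 𝕜ⁿ` be the
point whose first `k` coordinates are `1` and whose remaining coordinates are `0`.  Then the
set `Xₖ` of forms of `Bₙ` vanishing at `pₖ` is a copoint (a flat of rank `n - 1`) of the
linear matroid on `Bₙ`, and the complementary cocircuit `Bₙ \ Xₖ` has size
`C(k,2) + k + 2k(n-k)`. -/
theorem Bn_copoint_cocircuit_card {𝕜 : Type} [Field 𝕜] [CharZero 𝕜] {n k : ℕ}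
    (hk1 : 1 ≤ k) (hkn : k ≤ n)
    (Bn : Finset (MvPolynomial (Fin n) 𝕜))
    (hBn : ∀ l, l ∈ Bn ↔ (∃ i : Fin n, l = MvPolynomial.X i) ∨
      (∃ i j : Fin n, i < j ∧ (l = MvPolynomial.X i - MvPolynomial.X j ∨
        l = MvPolynomial.X i + MvPolynomial.X j)))
    (p : Fin n → 𝕜) (hp : ∀ i : Fin n, p i = if (i : ℕ) < k then 1 else 0)
    (Xk : Set (MvPolynomial (Fin n) 𝕜))
    (hXk : Xk = {l : MvPolynomial (Fin n) 𝕜 | l ∈ Bn ∧ MvPolynomial.eval p l = 0}) :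
    (arrMatroid Bn).IsFlat Xk ∧
      (arrMatroid Bn).mrk Xk = ((n - 1 : ℕ) : ℕ∞) ∧
      ((↑Bn : Set (MvPolynomial (Fin n) 𝕜)) \ Xk).encard =
        ((k.choose 2 + k + 2 * k * (n - k) : ℕ) : ℕ∞) := by
  classical
  -- independence in the matroid
  have hIndep : ∀ I : Set (MvPolynomial (Fin n) 𝕜), (arrMatroid Bn).Indep I ↔
      (I ⊆ ↑Bn ∧ LinearIndependent 𝕜 (fun x : I => (x : MvPolynomial (Fin n) 𝕜))) := by
    intro I
    rw [arrMatroid, vecMatroid, IndepMatroid.matroid_indep_iff, IndepMatroid.ofFinite_indep]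
  have hE : (arrMatroid Bn).E = ↑Bn := rfl
  -- evaluation via the coefficient map
  have hdot : ∀ l ∈ Bn, MvPolynomial.eval p l = dotMap 𝕜 p (psiMap 𝕜 n l) := by
    intro l hl
    rcases (hBn l).mp hl with ⟨i, rfl⟩ | ⟨i, j, _, rfl | rfl⟩ <;>
      simp [map_sub, map_add, psiMap_X, dotMap_single, map_sub (dotMap 𝕜 p)]
  have hL : ∀ l ∈ Bn, elMap 𝕜 n (psiMap 𝕜 n l) = l := by
    intro l hl
    rcases (hBn l).mp hl with ⟨i, rfl⟩ | ⟨i, j, _, rfl | rfl⟩ <;>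
      simp [map_sub, map_add, elMap_psiMap_X]
  have hXksub : Xk ⊆ ↑Bn := by rw [hXk]; exact fun l hl => hl.1
  have hXkker : ∀ l ∈ Xk, dotMap 𝕜 p (psiMap 𝕜 n l) = 0 := by
    intro l hl
    rw [hXk] at hl
    rw [← hdot l hl.1]
    exact hl.2
  refine ⟨?_, ?_, ?_⟩
  · -- Flat
    refine ⟨?_, by rw [hE]; exact hXksub⟩
    intro I X hIXk hIX e he
    obtain ⟨hIBn, hIli⟩ := (hIndep I).mp hIXk.indep
    by_cases heI : e ∈ I
    · exact hIXk.subset heI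
    · have hdep := hIX.insert_dep ⟨he, heI⟩
      have heBn : e ∈ ↑Bn := by
        have h2 := hdep.2 (Set.mem_insert e I); rwa [hE] at h2
      have hnli : ¬ LinearIndependent 𝕜
          (fun x : (insert e I : Set (MvPolynomial (Fin n) 𝕜)) => (x : MvPolynomial (Fin n) 𝕜)) :=
        fun h => hdep.1 ((hIndep _).mpr ⟨Set.insert_subset heBn hIBn, h⟩)
      have hspan : e ∈ span 𝕜 I := by
        by_contra hns
        exact hnli ((show LinearIndepOn 𝕜 id I from hIli).id_insert hns)
      have hker : span 𝕜 I ≤ LinearMap.ker ((dotMap 𝕜 p).comp (psiMap 𝕜 n)) := by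
        rw [span_le]
        intro l hl
        exact LinearMap.mem_ker.mpr (by simpa using hXkker l (hIXk.subset hl))
      rw [hXk]
      refine ⟨heBn, ?_⟩
      have hm := hker hspan
      rw [LinearMap.mem_ker] at hm
      rw [hdot e heBn]
      simpa using hm
  · -- rank
    have hkerrank : Module.finrank 𝕜 (LinearMap.ker (dotMap 𝕜 p)) = n - 1 := by
      have hsurj : Function.Surjective (dotMap 𝕜 p) := by
        intro c
        refine ⟨c • (Pi.single (⟨0, lt_of_lt_of_le hk1 hkn⟩ : Fin n) (1:𝕜) : Fin n → 𝕜), ?_⟩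
        rw [map_smul, dotMap_single, hp]
        simp only [smul_eq_mul]
        rw [if_pos (show 0 < k by omega)]
        exact mul_one c
      have h1 := LinearMap.finrank_range_add_finrank_ker (dotMap 𝕜 p)
      rw [LinearMap.range_eq_top.mpr hsurj, finrank_top, Module.finrank_self,
        Module.finrank_pi, Fintype.card_fin] at h1
      omega
    have hub : ∀ I : Set (MvPolynomial (Fin n) 𝕜), (arrMatroid Bn).Indep I → I ⊆ Xk →
        I.encard ≤ ((n - 1 : ℕ) : ℕ∞) := by
      intro I hI hIXk'
      obtain ⟨hIBn, hIli⟩ := (hIndep I).mp hI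
      have hfin : I.Finite := Bn.finite_toSet.subset hIBn
      letI := hfin.fintype
      have h1 : LinearIndependent 𝕜 (fun x : I => psiMap 𝕜 n (x : MvPolynomial (Fin n) 𝕜)) := by
        apply LinearIndependent.of_comp (elMap 𝕜 n)
        have heq : ((elMap 𝕜 n) ∘ fun x : I => psiMap 𝕜 n (x : MvPolynomial (Fin n) 𝕜)) =
            (fun x : I => (x : MvPolynomial (Fin n) 𝕜)) :=
          funext fun x => hL x (hIBn x.2)
        rw [heq]; exact hIli
      have h2 : LinearIndependent 𝕜 (fun x : I =>
          (⟨psiMap 𝕜 n (x : MvPolynomial (Fin n) 𝕜),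
            LinearMap.mem_ker.mpr (hXkker x (hIXk' x.2))⟩ :
            LinearMap.ker (dotMap 𝕜 p))) := by
        apply LinearIndependent.of_comp (LinearMap.ker (dotMap 𝕜 p)).subtype
        exact h1
      have hcard := h2.fintype_card_le_finrank
      rw [hkerrank] at hcard
      rw [hfin.encard_eq_coe_toFinset_card]
      have : hfin.toFinset.card = Fintype.card I := by
        simp [Set.Finite.card_toFinset]
      rw [this]
      exact_mod_cast hcard
    -- lower bound family
    have hn2 : ∀ j : Fin (n-1), (j:ℕ)+1 < n := fun j => by have := j.2; omega
    have hn1 : ∀ j : Fin (n-1), (j:ℕ) < n := fun j => by have := j.2; omega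
    set fam : Fin (n-1) → MvPolynomial (Fin n) 𝕜 := fun j =>
      if (j:ℕ)+1 < k then MvPolynomial.X ⟨j, hn1 j⟩ - MvPolynomial.X ⟨(j:ℕ)+1, hn2 j⟩
      else MvPolynomial.X ⟨(j:ℕ)+1, hn2 j⟩ with hfam
    have hfamXk : ∀ j, fam j ∈ Xk := by
      intro j
      rw [hXk, hfam]
      dsimp only
      split_ifs with hc
      · refine ⟨(hBn _).mpr (Or.inr ⟨⟨j, hn1 j⟩, ⟨(j:ℕ)+1, hn2 j⟩,
          by simp [Fin.mk_lt_mk], Or.inl rfl⟩), ?_⟩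
        rw [map_sub, MvPolynomial.eval_X, MvPolynomial.eval_X, hp, hp]
        rw [if_pos (show ((⟨j, hn1 j⟩ : Fin n) : ℕ) < k by simp; omega),
          if_pos (show ((⟨(j:ℕ)+1, hn2 j⟩ : Fin n) : ℕ) < k by simpa using hc)]
        ring
      · refine ⟨(hBn _).mpr (Or.inl ⟨_, rfl⟩), ?_⟩
        rw [MvPolynomial.eval_X, hp, if_neg (by simpa using hc)]
    have hfam_li : LinearIndependent 𝕜 fam := by
      apply LinearIndependent.of_comp (psiMap 𝕜 n)
      apply triangular_linearIndependent _ (fun j : Fin (n-1) => (⟨(j:ℕ)+1, hn2 j⟩ : Fin n))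
      · intro j
        show psiMap 𝕜 n (fam j) _ ≠ 0
        rw [hfam]
        dsimp only
        split_ifs with hc
        · rw [map_sub, psiMap_X, psiMap_X]
          rw [Pi.sub_apply, Pi.single_apply, Pi.single_apply,
            if_neg (by simp [Fin.ext_iff]), if_pos rfl]
          norm_num
        · rw [psiMap_X, Pi.single_apply, if_pos rfl]
          exact one_ne_zero
      · intro i j hij
        have hijn : (i:ℕ) < (j:ℕ) := hij
        show psiMap 𝕜 n (fam i) _ = 0
        rw [hfam]
        dsimp only
        split_ifs with hc
        · rw [map_sub, psiMap_X, psiMap_X]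
          rw [Pi.sub_apply, Pi.single_apply, Pi.single_apply,
            if_neg (by simp [Fin.ext_iff]; omega), if_neg (by simp [Fin.ext_iff]; omega)]
          ring
        · rw [psiMap_X, Pi.single_apply, if_neg (by simp [Fin.ext_iff]; omega)]
    have hI0sub : Set.range fam ⊆ Xk := by rintro l ⟨j, rfl⟩; exact hfamXk j
    have hI0indep : (arrMatroid Bn).Indep (Set.range fam) :=
      (hIndep _).mpr ⟨fun l hl => hXksub (hI0sub hl), (linearIndepOn_id_range_iff hfam_li.injective).mpr hfam_li⟩
    have hI0card : (Set.range fam).encard = ((n - 1 : ℕ) : ℕ∞) := by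
      rw [← Set.image_univ, hfam_li.injective.encard_image _,
        Set.encard_univ]
      simp
    simp only [Matroid.mrk]
    apply le_antisymm
    · exact iSup₂_le fun I hI => hub I hI.1 hI.2
    · exact le_iSup₂_of_le (Set.range fam) ⟨hI0indep, hI0sub⟩ (le_of_eq hI0card.symm)
  · -- cardinality
    set D : Finset (MvPolynomial (Fin n) 𝕜) :=
      Bn.filter (fun l => MvPolynomial.eval p l ≠ 0) with hD
    have hset : (↑Bn : Set (MvPolynomial (Fin n) 𝕜)) \ Xk = ↑D := by
      ext l
      simp only [hD, Set.mem_diff, Finset.mem_coe, Finset.mem_filter, hXk, Set.mem_setOf_eq]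
      tauto
    rw [hset, Set.encard_coe_eq_coe_finsetCard]
    rw [Nat.cast_inj]
    -- the sum-of-coefficients invariant
    set tau : MvPolynomial (Fin n) 𝕜 → 𝕜 := fun l => ∑ a, psiMap 𝕜 n l a with htau
    have htau1 : ∀ i : Fin n, tau (MvPolynomial.X i) = 1 := fun i => sum_psiMap_X i
    have htau2 : ∀ i j : Fin n, tau (MvPolynomial.X i - MvPolynomial.X j) = 0 := by
      intro i j
      rw [htau]
      simp only [map_sub, Pi.sub_apply, Finset.sum_sub_distrib]
      rw [sum_psiMap_X i, sum_psiMap_X j, sub_self]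
    have htau3 : ∀ i j : Fin n, tau (MvPolynomial.X i + MvPolynomial.X j) = 2 := by
      intro i j
      rw [htau]
      simp only [map_add, Pi.add_apply, Finset.sum_add_distrib]
      rw [sum_psiMap_X i, sum_psiMap_X j]
      norm_num
    -- the three pieces
    set S1 : Finset (Fin n) := Finset.univ.filter (fun i => (i:ℕ) < k) with hS1def
    set S2 : Finset (Fin n × Fin n) :=
      Finset.univ.filter (fun q => (q.1:ℕ) < k ∧ ¬ (q.2:ℕ) < k) with hS2def
    set S3 : Finset (Fin n × Fin n) :=
      Finset.univ.filter (fun q => q.1 < q.2 ∧ (q.1:ℕ) < k) with hS3def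
    set A1 : Finset (MvPolynomial (Fin n) 𝕜) :=
      S1.image (fun i => MvPolynomial.X i) with hA1def
    set A2 : Finset (MvPolynomial (Fin n) 𝕜) :=
      S2.image (fun q => MvPolynomial.X q.1 - MvPolynomial.X q.2) with hA2def
    set A3 : Finset (MvPolynomial (Fin n) 𝕜) :=
      S3.image (fun q => MvPolynomial.X q.1 + MvPolynomial.X q.2) with hA3def
    have hDeq : D = (A1 ∪ A2) ∪ A3 := by
      ext l
      simp only [hD, hA1def, hA2def, hA3def, hS1def, hS2def, hS3def, Finset.mem_filter,
        Finset.mem_union, Finset.mem_image, Finset.mem_univ, true_and]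
      constructor
      · rintro ⟨hlB, hlnz⟩
        rcases (hBn l).mp hlB with ⟨i, rfl⟩ | ⟨i, j, hij, rfl | rfl⟩
        · left; left
          refine ⟨i, ?_, rfl⟩
          by_contra hik
          exact hlnz (by rw [MvPolynomial.eval_X, hp, if_neg hik])
        · left; right
          have hijn : (i:ℕ) < (j:ℕ) := hij
          refine ⟨(i, j), ?_, rfl⟩
          rw [map_sub, MvPolynomial.eval_X, MvPolynomial.eval_X, hp, hp] at hlnz
          by_cases h1 : (i:ℕ) < k <;> by_cases h2 : (j:ℕ) < k
          · rw [if_pos h1, if_pos h2] at hlnz; simp at hlnz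
          · exact ⟨h1, h2⟩
          · omega
          · rw [if_neg h1, if_neg h2] at hlnz; simp at hlnz
        · right
          have hijn : (i:ℕ) < (j:ℕ) := hij
          refine ⟨(i, j), ⟨hij, ?_⟩, rfl⟩
          show (i:ℕ) < k
          by_contra h1
          apply hlnz
          rw [map_add, MvPolynomial.eval_X, MvPolynomial.eval_X, hp, hp, if_neg h1,
            if_neg (by omega)]
          ring
      · rintro ((⟨i, hik, rfl⟩ | ⟨⟨i, j⟩, ⟨h1, h2⟩, rfl⟩) | ⟨⟨i, j⟩, ⟨hij, h1⟩, rfl⟩)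
        · refine ⟨(hBn _).mpr (Or.inl ⟨i, rfl⟩), ?_⟩
          rw [MvPolynomial.eval_X, hp, if_pos hik]
          exact one_ne_zero
        · have h1' : (i:ℕ) < k := h1
          have h2' : ¬ (j:ℕ) < k := h2
          have hij : i < j := by rw [Fin.lt_def]; omega
          refine ⟨(hBn _).mpr (Or.inr ⟨i, j, hij, Or.inl rfl⟩), ?_⟩
          rw [map_sub, MvPolynomial.eval_X, MvPolynomial.eval_X, hp, hp, if_pos h1', if_neg h2']
          simp
        · have h1' : (i:ℕ) < k := h1
          refine ⟨(hBn _).mpr (Or.inr ⟨i, j, hij, Or.inr rfl⟩), ?_⟩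
          rw [map_add, MvPolynomial.eval_X, MvPolynomial.eval_X, hp, hp, if_pos h1']
          by_cases h2 : (j:ℕ) < k
          · rw [if_pos h2]; norm_num
          · rw [if_neg h2]; norm_num
    -- disjointness
    have hd12 : Disjoint A1 A2 := by
      rw [Finset.disjoint_left]
      intro l hl1 hl2
      rw [hA1def, Finset.mem_image] at hl1
      rw [hA2def, Finset.mem_image] at hl2
      obtain ⟨i, -, rfl⟩ := hl1
      obtain ⟨q, -, hq⟩ := hl2
      have := congrArg tau hq
      rw [htau2, htau1] at this
      exact one_ne_zero this.symm
    have hd13 : Disjoint A1 A3 := by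
      rw [Finset.disjoint_left]
      intro l hl1 hl2
      rw [hA1def, Finset.mem_image] at hl1
      rw [hA3def, Finset.mem_image] at hl2
      obtain ⟨i, -, rfl⟩ := hl1
      obtain ⟨q, -, hq⟩ := hl2
      have := congrArg tau hq
      rw [htau3, htau1] at this
      norm_num at this
    have hd23 : Disjoint A2 A3 := by
      rw [Finset.disjoint_left]
      intro l hl1 hl2
      rw [hA2def, Finset.mem_image] at hl1
      rw [hA3def, Finset.mem_image] at hl2
      obtain ⟨q, -, rfl⟩ := hl1
      obtain ⟨q', -, hq⟩ := hl2
      have := congrArg tau hq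
      rw [htau3, htau2] at this
      norm_num at this
    -- cardinalities
    have hS1card : S1.card = k := by
      have himg : S1 = Finset.image (Fin.castLE hkn) Finset.univ := by
        ext i
        simp only [hS1def, Finset.mem_filter, Finset.mem_univ, true_and, Finset.mem_image]
        constructor
        · intro h
          exact ⟨⟨(i:ℕ), h⟩, by ext; simp⟩
        · rintro ⟨j, rfl⟩
          simpa using j.2
      rw [himg, Finset.card_image_of_injective _ (Fin.castLE_injective hkn),
        Finset.card_univ, Fintype.card_fin]
    have hTcard : (Finset.univ.filter (fun j : Fin n => ¬ (j:ℕ) < k)).card = n - k := by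
      rw [Finset.filter_not, Finset.card_sdiff_of_subset (Finset.filter_subset _ _), Finset.card_univ,
        Fintype.card_fin]
      rw [show Finset.univ.filter (fun j : Fin n => (j:ℕ) < k) = S1 from rfl, hS1card]
    have hS2card : S2.card = k * (n - k) := by
      have hprod : S2 = S1 ×ˢ (Finset.univ.filter (fun j : Fin n => ¬ (j:ℕ) < k)) := by
        ext ⟨i, j⟩
        simp [hS1def, hS2def, Finset.mem_product]
      rw [hprod, Finset.card_product, hS1card, hTcard]
    have hS3card : S3.card = k.choose 2 + k * (n - k) := by
      have hsplit : S3 = (Finset.univ.filter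
          (fun q : Fin n × Fin n => q.1 < q.2 ∧ (q.2:ℕ) < k)) ∪ S2 := by
        ext ⟨i, j⟩
        simp only [hS3def, hS2def, Finset.mem_filter, Finset.mem_union, Finset.mem_univ,
          true_and, Fin.lt_def]
        omega
      have hdisj : Disjoint (Finset.univ.filter
          (fun q : Fin n × Fin n => q.1 < q.2 ∧ (q.2:ℕ) < k)) S2 := by
        rw [Finset.disjoint_left]
        intro q hq1 hq2
        rw [Finset.mem_filter] at hq1
        rw [hS2def, Finset.mem_filter] at hq2
        exact hq2.2.2 hq1.2.2
      have hS3a : (Finset.univ.filter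
          (fun q : Fin n × Fin n => q.1 < q.2 ∧ (q.2:ℕ) < k)).card = k.choose 2 := by
        have himg : Finset.univ.filter (fun q : Fin n × Fin n => q.1 < q.2 ∧ (q.2:ℕ) < k) =
            (Finset.univ.filter (fun q : Fin k × Fin k => q.1 < q.2)).image
              (fun q => (Fin.castLE hkn q.1, Fin.castLE hkn q.2)) := by
          ext ⟨i, j⟩
          simp only [Finset.mem_filter, Finset.mem_univ, true_and, Finset.mem_image,
            Fin.lt_def, Prod.mk.injEq]
          constructor
          · rintro ⟨hij, hjk⟩
            exact ⟨(⟨(i:ℕ), by omega⟩, ⟨(j:ℕ), hjk⟩), by simpa using hij,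
              by constructor <;> (ext; simp)⟩
          · rintro ⟨⟨q1, q2⟩, hlt, h1, h2⟩
            subst h1; subst h2
            simp only [Fin.coe_castLE]
            exact ⟨hlt, q2.2⟩
        rw [himg, Finset.card_image_of_injective, card_pairs]
        intro q q' h
        rw [Prod.mk.injEq] at h
        exact Prod.ext (Fin.castLE_injective hkn h.1) (Fin.castLE_injective hkn h.2)
      rw [hsplit, Finset.card_union_of_disjoint hdisj, hS3a, hS2card]
    -- image cardinalities
    have hA1card : A1.card = k := by
      rw [hA1def, Finset.card_image_of_injective _ MvPolynomial.X_injective, hS1card]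
    have hA2card : A2.card = k * (n - k) := by
      rw [hA2def, Finset.card_image_of_injOn, hS2card]
      intro q hq q' hq' h
      simp only [hS2def, Finset.mem_coe, Finset.mem_filter, Finset.mem_univ, true_and] at hq hq'
      have h1 : q.1 ≠ q.2 := by
        intro hc
        obtain ⟨hqa, hqb⟩ := hq
        rw [hc] at hqa
        omega
      have h2 : q'.1 ≠ q'.2 := by
        intro hc
        obtain ⟨hqa, hqb⟩ := hq'
        rw [hc] at hqa
        omega
      obtain ⟨ha, hb⟩ := X_sub_inj _ _ _ _ h1 h2 h
      exact Prod.ext ha hb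
    have hA3card : A3.card = k.choose 2 + k * (n - k) := by
      rw [hA3def, Finset.card_image_of_injOn, hS3card]
      intro q hq q' hq' h
      simp only [hS3def, Finset.mem_coe, Finset.mem_filter, Finset.mem_univ, true_and] at hq hq'
      obtain ⟨ha, hb⟩ := X_add_inj _ _ _ _ hq.1 hq'.1 h
      exact Prod.ext ha hb
    rw [hDeq, Finset.card_union_of_disjoint (by
        rw [Finset.disjoint_union_left]; exact ⟨hd13, hd23⟩),
      Finset.card_union_of_disjoint hd12, hA1card, hA2card, hA3card]
    ring
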